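/- arXiv:1705.00729 — 5 statements merged into one kernel-verified Lean document; each statement's English description precedes it below -/
import Mathlib

section
/- Let p(x) = Σ_{i=0}^n p_i x^i be a polynomial of degree n ≥ 1 over ℂ with p_n ≠ 0, let r_1 = max_{1≤j≤n} |x_j| be its largest root radius (the maximum modulus of its complex roots), and set r_1^+ = 2·max_{1≤i≤n} |p_{n−i}/p_n|^{1/i}. Then r_1^+/(2n) ≤ r_1 ≤ r_1^+. -/
/-!
By Vieta, `p_{n-i}/p_n = ± e_i(x_1, …, x_n)`, a sum of `C(n, i) ≤ n^i` products of `i` roots,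
so `|p_{n-i}/p_n|^{1/i} ≤ n r_1`, which is the lower bound. Conversely, with
`M = max_i |p_{n-i}/p_n|^{1/i}`, no root `z` has `|z| > 2M`: the leading term
`|p_n| |z|^n` exceeds `∑_{k<n} |p_k| |z|^k ≤ |p_n| ∑_{k<n} M^{n-k} |z|^k`, whose terms shrink
geometrically with ratio `M / |z| < 1/2` away from `k = n`.
-/

open Polynomial

theorem Multiset.norm_prod_le_pow_card {R : Type*} [SeminormedCommRing R] [NormOneClass R]
    {s : Multiset R} {r : ℝ} (h : ∀ x ∈ s, ‖x‖ ≤ r) : ‖s.prod‖ ≤ r ^ card s := by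
  induction s using Multiset.induction with
  | empty => simp
  | cons a s ih =>
    have ha := h a (mem_cons_self a s)
    rw [prod_cons, card_cons, pow_succ']
    exact (norm_mul_le _ _).trans <| mul_le_mul ha
      (ih fun x hx => h x (mem_cons_of_mem hx)) (norm_nonneg _) ((norm_nonneg a).trans ha)

theorem Multiset.norm_esymm_le {R : Type*} [SeminormedCommRing R] [NormOneClass R]
    {s : Multiset R} {r : ℝ} (h : ∀ x ∈ s, ‖x‖ ≤ r) (i : ℕ) :
    ‖s.esymm i‖ ≤ (card s).choose i * r ^ i := by
  refine (norm_multiset_sum_le _).trans ?_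
  rw [← card_powersetCard i s, ← nsmul_eq_mul, ← card_map Multiset.prod, ← card_map norm]
  refine sum_le_card_nsmul _ _ fun y hy => ?_
  obtain ⟨t, ht, rfl⟩ := mem_map.mp hy
  obtain ⟨x, hx, rfl⟩ := mem_map.mp ht
  obtain ⟨hxs, rfl⟩ := mem_powersetCard.mp hx
  exact norm_prod_le_pow_card fun a ha => h a (mem_of_le hxs ha)

theorem Polynomial.norm_coeff_natDegree_sub_le {K : Type*} [NormedField K] {p : K[X]}
    (hroots : Multiset.card p.roots = p.natDegree) {r : ℝ} (h : ∀ x ∈ p.roots, ‖x‖ ≤ r) {i : ℕ}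
    (hi : i ≤ p.natDegree) :
    ‖p.coeff (p.natDegree - i)‖ ≤ ‖p.leadingCoeff‖ * (p.natDegree.choose i * r ^ i) := by
  rw [coeff_eq_esymm_roots_of_card hroots (Nat.sub_le _ _), Nat.sub_sub_self hi, norm_mul,
    norm_mul, norm_pow, norm_neg, norm_one, one_pow, mul_one, ← hroots]
  exact mul_le_mul_of_nonneg_left (Multiset.norm_esymm_le h i) (norm_nonneg _)

theorem sum_range_pow_mul_pow_lt {M r : ℝ} (hM : 0 ≤ M) (h : 2 * M < r) (n : ℕ) :
    ∑ k ∈ Finset.range n, M ^ (n - k) * r ^ k < r ^ n := by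
  induction n with
  | zero => simp
  | succ n ih =>
    have hshift : ∑ k ∈ Finset.range n, M ^ (n + 1 - k) * r ^ k
        = M * ∑ k ∈ Finset.range n, M ^ (n - k) * r ^ k := by
      rw [Finset.mul_sum]
      refine Finset.sum_congr rfl fun k hk => ?_
      rw [Nat.sub_add_comm (Finset.mem_range.mp hk).le, pow_succ]
      ring
    have hr : 0 < r ^ n := pow_pos (by linarith) n
    rw [Finset.sum_range_succ, hshift, Nat.add_sub_cancel_left, pow_one, pow_succ]
    nlinarith

theorem Polynomial.IsRoot.norm_le_two_mul_of_norm_coeff_le {K : Type*} [NormedDivisionRing K]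
    {p : K[X]} {z : K} (hz : p.IsRoot z) (hp : p ≠ 0) {M : ℝ} (hM : 0 ≤ M)
    (hcoeff : ∀ k < p.natDegree, ‖p.coeff k‖ ≤ ‖p.leadingCoeff‖ * M ^ (p.natDegree - k)) :
    ‖z‖ ≤ 2 * M := by
  by_contra! hz2
  have hlc : 0 < ‖p.leadingCoeff‖ := norm_pos_iff.mpr (leadingCoeff_ne_zero.mpr hp)
  have hlead : p.leadingCoeff * z ^ p.natDegree
      = -∑ k ∈ Finset.range p.natDegree, p.coeff k * z ^ k := by
    rw [eq_neg_iff_add_eq_zero, add_comm, ← coeff_natDegree,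
      ← Finset.sum_range_succ (fun k => p.coeff k * z ^ k), ← eval_eq_sum_range]
    exact hz
  refine lt_irrefl (‖p.leadingCoeff‖ * ‖z‖ ^ p.natDegree) ?_
  calc ‖p.leadingCoeff‖ * ‖z‖ ^ p.natDegree
      = ‖∑ k ∈ Finset.range p.natDegree, p.coeff k * z ^ k‖ := by
        rw [← norm_pow, ← norm_mul, hlead, norm_neg]
    _ ≤ ∑ k ∈ Finset.range p.natDegree, ‖p.coeff k‖ * ‖z‖ ^ k := by
        simpa only [norm_mul, norm_pow] using norm_sum_le _ fun k => p.coeff k * z ^ k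
    _ ≤ ∑ k ∈ Finset.range p.natDegree, ‖p.leadingCoeff‖ * M ^ (p.natDegree - k) * ‖z‖ ^ k := by
        gcongr with k hk
        exact hcoeff k (Finset.mem_range.mp hk)
    _ = ‖p.leadingCoeff‖ * ∑ k ∈ Finset.range p.natDegree, M ^ (p.natDegree - k) * ‖z‖ ^ k := by
        simp only [Finset.mul_sum, mul_assoc]
    _ < ‖p.leadingCoeff‖ * ‖z‖ ^ p.natDegree :=
        mul_lt_mul_of_pos_left (sum_range_pow_mul_pow_lt hM hz2 _) hlc

theorem norm_div_rpow_one_div_le_iff {K : Type*} [NormedDivisionRing K] {a b : K} (hb : b ≠ 0)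
    {M : ℝ} (hM : 0 ≤ M) {i : ℕ} (hi : i ≠ 0) :
    ‖a / b‖ ^ (1 / (i : ℝ)) ≤ M ↔ ‖a‖ ≤ ‖b‖ * M ^ i := by
  rw [one_div, Real.rpow_inv_le_iff_of_pos (norm_nonneg _) hM (by positivity), Real.rpow_natCast,
    norm_div, div_le_iff₀' (norm_pos_iff.mpr hb)]

/-- For a degree-`n ≥ 1` polynomial `p` over `ℂ` with `p_n ≠ 0`,
if `r1` is the largest modulus of a root of `p` and
`r1plus = 2 · max_{1 ≤ i ≤ n} |p_{n-i}/p_n|^{1/i}`, then `r1plus/(2n) ≤ r1 ≤ r1plus`. -/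
theorem root_radius_bounds (n : ℕ) (hn : 1 ≤ n) (p : Polynomial ℂ)
    (hdeg : p.natDegree = n) (hpn : p.coeff n ≠ 0)
    (r1 : ℝ)
    (hub : ∀ x ∈ p.roots, ‖x‖ ≤ r1)
    (hmem : ∃ x ∈ p.roots, ‖x‖ = r1)
    (r1plus : ℝ)
    (hr1plus : r1plus = 2 * (Finset.Icc 1 n).sup' (Finset.nonempty_Icc.mpr hn)
      (fun i => ‖p.coeff (n - i) / p.coeff n‖ ^ ((1 : ℝ) / (i : ℝ)))) :
    r1plus / (2 * n) ≤ r1 ∧ r1 ≤ r1plus := by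
  subst hdeg hr1plus
  obtain ⟨x₀, hx₀, rfl⟩ := hmem
  set M := (Finset.Icc 1 p.natDegree).sup' (Finset.nonempty_Icc.mpr hn)
    (fun i => ‖p.coeff (p.natDegree - i) / p.coeff p.natDegree‖ ^ ((1 : ℝ) / (i : ℝ)))
  have hM : ∀ i ∈ Finset.Icc 1 p.natDegree,
      ‖p.coeff (p.natDegree - i) / p.coeff p.natDegree‖ ^ ((1 : ℝ) / (i : ℝ)) ≤ M :=
    (Finset.sup'_le_iff _ _).mp le_rfl
  have hM₀ : 0 ≤ M := (Real.rpow_nonneg (norm_nonneg _) _).trans (hM 1 (by simpa using hn))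
  have hlower : M ≤ p.natDegree * ‖x₀‖ := by
    refine Finset.sup'_le _ _ fun i hi => ?_
    obtain ⟨hi₁, hin⟩ := Finset.mem_Icc.mp hi
    rw [norm_div_rpow_one_div_le_iff hpn (by positivity) (by omega)]
    calc ‖p.coeff (p.natDegree - i)‖
        ≤ ‖p.leadingCoeff‖ * (p.natDegree.choose i * ‖x₀‖ ^ i) :=
          norm_coeff_natDegree_sub_le (splits_iff_card_roots.mp (IsAlgClosed.splits p)) hub hin
      _ ≤ ‖p.leadingCoeff‖ * (p.natDegree * ‖x₀‖) ^ i := by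
          rw [mul_pow]
          gcongr
          exact_mod_cast Nat.choose_le_pow _ _
  have hupper : ‖x₀‖ ≤ 2 * M := by
    refine (isRoot_of_mem_roots hx₀).norm_le_two_mul_of_norm_coeff_le (ne_zero_of_mem_roots hx₀)
      hM₀ fun k hk => ?_
    have := hM (p.natDegree - k) (Finset.mem_Icc.mpr ⟨by omega, by omega⟩)
    rwa [Nat.sub_sub_self hk.le, norm_div_rpow_one_div_le_iff hpn hM₀ (by omega)] at this
  refine ⟨?_, hupper⟩
  rw [div_le_iff₀ (by positivity)]
  linarith
end

section
/- Let z, z' ∈ ℂ, let ρ' > 0 with 2ρ' ≤ |z − z'|, and let a, b ∈ ℂ satisfy |a − z| ≤ ρ' and |b − z'| ≤ ρ'. Then |Im((b − a)·conj(z' − z))| ≤ 2ρ'·|b − a|; equivalently, the sine of the angle between the direction b − a of any line meeting both discs D(z, ρ') and D(z', ρ') and the direction z' − z of the line through the centers has absolute value at most 2ρ'/|z − z'|. -/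
/-!
Writing `z' - z = (b - a) + w` with `w = (a - z) - (b - z')`, the part `b - a` contributes
`‖b - a‖²`, a real number, to `(b - a) * conj (z' - z)`. Hence the imaginary part only sees `w`,
and `‖w‖ ≤ 2ρ'` by the triangle inequality.
-/

open ComplexConjugate

namespace Complex

theorem im_mul_conj_sub_self (u v : ℂ) : (u * conj (v - u)).im = (u * conj v).im := by
  simp only [map_sub, mul_sub, sub_im, mul_conj, ofReal_im, sub_zero]

theorem abs_im_mul_conj_le (u v : ℂ) : |(u * conj v).im| ≤ ‖u‖ * ‖v - u‖ :=
  calc |(u * conj v).im| = |(u * conj (v - u)).im| := by rw [im_mul_conj_sub_self]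
    _ ≤ ‖u * conj (v - u)‖ := abs_im_le_norm _
    _ = ‖u‖ * ‖v - u‖ := by rw [norm_mul, norm_conj]

end Complex

theorem chord_angle_bound_general (z z' : ℂ) (ρ' : ℝ)
    (a b : ℂ) (ha : ‖a - z‖ ≤ ρ') (hb : ‖b - z'‖ ≤ ρ') :
    |((b - a) * (starRingEnd ℂ) (z' - z)).im| ≤ 2 * ρ' * ‖b - a‖ := by
  have hw : ‖(z' - z) - (b - a)‖ ≤ 2 * ρ' := by
    rw [show (z' - z) - (b - a) = (a - z) - (b - z') by ring, two_mul]
    exact norm_sub_le_of_le ha hb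
  calc |((b - a) * conj (z' - z)).im| ≤ ‖b - a‖ * ‖(z' - z) - (b - a)‖ :=
        Complex.abs_im_mul_conj_le _ _
    _ ≤ ‖b - a‖ * (2 * ρ') := by gcongr
    _ = 2 * ρ' * ‖b - a‖ := mul_comm _ _

/-- If the discs `D(z, ρ')` and `D(z', ρ')` with `2ρ' ≤ |z − z'|` contain
points `a` and `b` respectively, then `|Im((b − a)·conj(z' − z))| ≤ 2ρ'·|b − a|`:
the sine of the angle between the chord direction `b − a` and the direction `z' − z`
of the line through the centers is at most `2ρ'/|z − z'|` in absolute value. -/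
theorem chord_angle_bound (z z' : ℂ) (ρ' : ℝ) (hρ : 0 < ρ')
    (hsep : 2 * ρ' ≤ ‖z - z'‖)
    (a b : ℂ) (ha : ‖a - z‖ ≤ ρ') (hb : ‖b - z'‖ ≤ ρ') :
    |((b - a) * (starRingEnd ℂ) (z' - z)).im| ≤ 2 * ρ' * ‖b - a‖ :=
  chord_angle_bound_general z z' ρ' a b ha hb
end

section
/- (Measure-theoretic form of Lemma 1.) Let z, z' ∈ ℂ, ρ' > 0 with |z − z'| > 2ρ', and let w ∈ ℂ with |w − z| ≤ ρ'. Then the set of angles β ∈ [0, 2π] for which the straight line through w with direction e^{iβ}, namely {w + t·e^{iβ} : t ∈ ℝ}, intersects the closed disc D(z', ρ') has Lebesgue measure at most 4·arcsin(2ρ'/|z − z'|). In particular, if β is chosen uniformly at random in [0, 2π], the line through the disc D(z, ρ') at angle β intersects D(z', ρ') with probability at most (2/π)·arcsin(2ρ'/|z − z'|). -/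
/-!
A line through `w` at angle `β` that meets `D(z', ρ')` satisfies
`|z' - w| · |sin (β - arg (z' - w))| ≤ ρ'`, and `|z' - w| ≥ |z - z'| - ρ' ≥ |z - z'| / 2`.
Hence `β` lies, modulo `π`, within `θ = arcsin (2ρ' / |z - z'|)` of `arg (z' - w)`, i.e. in a
closed ball of radius `θ` on the circle `ℝ / πℤ`; the interval `[0, 2π]` covers that circle
twice, so the admissible angles have measure at most `2 · 2θ`.
-/

open MeasureTheory Real

open Set Metric in
theorem AddCircle.volume_coe_preimage_closedBall_inter_Ioc_le (T : ℝ) [Fact (0 < T)]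
    (x : AddCircle T) (ε t : ℝ) (n : ℕ) :
    volume (((↑) : ℝ → AddCircle T) ⁻¹' closedBall x ε ∩ Ioc t (t + n * T))
      ≤ n * ENNReal.ofReal (2 * ε) := by
  have hT : 0 < T := Fact.out
  induction n with
  | zero => simp
  | succ n ih =>
    have hsplit : Ioc t (t + (n + 1 : ℕ) * T)
        = Ioc t (t + n * T) ∪ Ioc (t + n * T) (t + n * T + T) := by
      rw [Ioc_union_Ioc_eq_Ioc (le_add_of_nonneg_right (by positivity)) (by linarith)]
      push_cast; ring_nf
    have hperiod : volume (((↑) : ℝ → AddCircle T) ⁻¹' closedBall x ε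
        ∩ Ioc (t + n * T) (t + n * T + T)) ≤ ENNReal.ofReal (2 * ε) := by
      rw [← add_projection_respects_measure T _ measurableSet_closedBall, volume_closedBall]
      exact ENNReal.ofReal_le_ofReal (min_le_right _ _)
    calc _ ≤ _ := by rw [hsplit, inter_union_distrib_left]; exact measure_union_le _ _
      _ ≤ n * ENNReal.ofReal (2 * ε) + ENNReal.ofReal (2 * ε) := add_le_add ih hperiod
      _ = _ := by push_cast; ring

theorem Real.norm_coe_addCircle_pi_le_of_abs_sin_le {x θ : ℝ} (hθ₀ : 0 ≤ θ) (hθ : θ ≤ π / 2)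
    (h : |sin x| ≤ sin θ) : ‖(x : AddCircle π)‖ ≤ θ := by
  set y := x - round (π⁻¹ * x) * π
  have hy : |y| ≤ π / 2 := by
    have := AddCircle.norm_le_half_period π (x := (x : AddCircle π)) pi_ne_zero
    rwa [AddCircle.norm_eq, abs_of_pos pi_pos] at this
  have hsin : sin |y| = |sin x| := by
    rw [← abs_sin_eq_sin_abs_of_abs_le_pi (by linarith [pi_pos]), sin_sub_int_mul_pi, abs_mul,
      abs_neg_one_zpow, one_mul]
  rw [AddCircle.norm_eq]
  exact (strictMonoOn_sin.le_iff_le ⟨by linarith [abs_nonneg y], hy⟩ ⟨by linarith, hθ⟩).mp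
    (hsin ▸ h)

theorem Complex.norm_mul_abs_sin_sub_arg_le_norm_sub (u : ℂ) (β t : ℝ) :
    ‖u‖ * |Real.sin (β - u.arg)| ≤ ‖t * exp (β * I) - u‖ := by
  have hrot : (t * exp (β * I) - u) * exp (-β * I) = t - ‖u‖ * exp ((u.arg - β : ℝ) * I) := by
    conv_lhs => rw [← norm_mul_exp_arg_mul_I u]
    push_cast
    rw [sub_mul, mul_assoc, ← exp_add, mul_assoc, ← exp_add]
    ring_nf; simp
  calc ‖u‖ * |Real.sin (β - u.arg)| = |((t * exp (β * I) - u) * exp (-β * I)).im| := by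
        rw [hrot, sub_im, ofReal_im, im_ofReal_mul, exp_ofReal_mul_I_im, zero_sub, abs_neg,
          abs_mul, abs_norm, ← abs_neg (Real.sin _), ← Real.sin_neg, neg_sub]
    _ ≤ ‖(t * exp (β * I) - u) * exp (-β * I)‖ := abs_im_le_norm _
    _ = ‖t * exp (β * I) - u‖ := by
        rw [norm_mul, ← ofReal_neg, norm_exp_ofReal_mul_I, mul_one]

open Set in
theorem Real.volume_setOf_abs_sin_sub_le_sin_le (α : ℝ) {θ : ℝ} (hθ₀ : 0 ≤ θ) (hθ : θ ≤ π / 2) :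
    volume {β | β ∈ Icc 0 (2 * π) ∧ |sin (β - α)| ≤ sin θ} ≤ ENNReal.ofReal (4 * θ) := by
  have : Fact (0 < π) := ⟨pi_pos⟩
  have hsub : {β | β ∈ Icc 0 (2 * π) ∧ |sin (β - α)| ≤ sin θ}
      ⊆ ((↑) : ℝ → AddCircle π) ⁻¹' Metric.closedBall α θ ∩ Icc 0 (0 + (2 : ℕ) * π) := by
    rintro β ⟨hβ, hsin⟩
    refine ⟨?_, by simpa using hβ⟩
    rw [mem_preimage, Metric.mem_closedBall, dist_eq_norm, ← AddCircle.coe_sub]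
    exact norm_coe_addCircle_pi_le_of_abs_sin_le hθ₀ hθ hsin
  calc _ ≤ _ := measure_mono hsub
    _ = volume (((↑) : ℝ → AddCircle π) ⁻¹' Metric.closedBall α θ
          ∩ Ioc 0 (0 + (2 : ℕ) * π)) :=
        measure_congr (Filter.EventuallyEq.inter .rfl Ioc_ae_eq_Icc).symm
    _ ≤ (2 : ℕ) * ENNReal.ofReal (2 * θ) :=
        AddCircle.volume_coe_preimage_closedBall_inter_Ioc_le ..
    _ = ENNReal.ofReal (4 * θ) := by
        rw [← ENNReal.ofReal_natCast, ← ENNReal.ofReal_mul (by norm_num)]; ring_nf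

open Metric in
theorem Complex.norm_sub_mul_abs_sin_sub_arg_le {z z' w : ℂ} {ρ : ℝ} (hsep : 2 * ρ ≤ ‖z - z'‖)
    (hw : ‖w - z‖ ≤ ρ) {β t : ℝ} (ht : w + t * exp (β * I) ∈ closedBall z' ρ) :
    ‖z - z'‖ * |Real.sin (β - (z' - w).arg)| ≤ 2 * ρ := by
  have hfar : ‖z - z'‖ ≤ 2 * ‖z' - w‖ := by
    have := norm_sub_le_norm_sub_add_norm_sub z w z'
    rw [norm_sub_rev z w, norm_sub_rev w z'] at this
    linarith
  have hdist : ‖t * exp (β * I) - (z' - w)‖ ≤ ρ := by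
    rwa [mem_closedBall, dist_eq_norm,
      show w + t * exp (β * I) - z' = t * exp (β * I) - (z' - w) by ring] at ht
  calc ‖z - z'‖ * |Real.sin (β - (z' - w).arg)|
      ≤ 2 * (‖z' - w‖ * |Real.sin (β - (z' - w).arg)|) := by
        rw [← mul_assoc]; gcongr
    _ ≤ 2 * ρ := by
        gcongr; exact (norm_mul_abs_sin_sub_arg_le_norm_sub _ β t).trans hdist

theorem measure_angles_hitting_far_disc_general (z z' w : ℂ) (ρ' : ℝ)
    (hsep : 2 * ρ' < ‖z - z'‖) (hw : ‖w - z‖ ≤ ρ') :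
    volume {β : ℝ | β ∈ Set.Icc 0 (2 * π) ∧
        ∃ t : ℝ, w + (t : ℂ) * Complex.exp (β * Complex.I) ∈ Metric.closedBall z' ρ'}
      ≤ ENNReal.ofReal (4 * Real.arcsin (2 * ρ' / ‖z - z'‖)) ∧
    (volume {β : ℝ | β ∈ Set.Icc 0 (2 * π) ∧
        ∃ t : ℝ, w + (t : ℂ) * Complex.exp (β * Complex.I) ∈ Metric.closedBall z' ρ'}).toReal
        / (2 * π)
      ≤ (2 / π) * Real.arcsin (2 * ρ' / ‖z - z'‖) := by
  have hρ : 0 ≤ ρ' := (norm_nonneg _).trans hw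
  have hR : 0 < ‖z - z'‖ := by linarith
  set s := 2 * ρ' / ‖z - z'‖
  have hs₀ : 0 ≤ s := by positivity
  have hs₁ : s ≤ 1 := (div_le_one hR).mpr hsep.le
  have hθ₀ : 0 ≤ arcsin s := arcsin_nonneg.mpr hs₀
  have hbound : volume {β : ℝ | β ∈ Set.Icc 0 (2 * π) ∧
      ∃ t : ℝ, w + (t : ℂ) * Complex.exp (β * Complex.I) ∈ Metric.closedBall z' ρ'}
        ≤ ENNReal.ofReal (4 * arcsin s) := by
    refine (measure_mono ?_).trans
      (volume_setOf_abs_sin_sub_le_sin_le (z' - w).arg hθ₀ (arcsin_le_pi_div_two s))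
    rintro β ⟨hβ, t, ht⟩
    refine ⟨hβ, ?_⟩
    rw [sin_arcsin (by linarith) hs₁, le_div_iff₀ hR, mul_comm]
    exact Complex.norm_sub_mul_abs_sin_sub_arg_le hsep.le hw ht
  refine ⟨hbound, ?_⟩
  calc _ ≤ 4 * arcsin s / (2 * π) := by
        gcongr; exact ENNReal.toReal_le_of_le_ofReal (by positivity) hbound
    _ = (2 / π) * arcsin s := by field_simp; ring

/-- measure-theoretic form of Lemma 1: If `|z − z'| > 2ρ' > 0` and
`|w − z| ≤ ρ'`, then the set of angles `β ∈ [0, 2π]` for which the line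
`{w + t·e^{iβ} : t ∈ ℝ}` meets the closed disc `D(z', ρ')` has Lebesgue measure at most
`4·arcsin(2ρ'/|z − z'|)`; in particular a uniformly random `β ∈ [0, 2π]` yields such a
line with probability at most `(2/π)·arcsin(2ρ'/|z − z'|)`. -/
theorem measure_angles_hitting_far_disc (z z' w : ℂ) (ρ' : ℝ) (hρ : 0 < ρ')
    (hsep : 2 * ρ' < ‖z - z'‖) (hw : ‖w - z‖ ≤ ρ') :
    volume {β : ℝ | β ∈ Set.Icc 0 (2 * π) ∧
        ∃ t : ℝ, w + (t : ℂ) * Complex.exp (β * Complex.I) ∈ Metric.closedBall z' ρ'}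
      ≤ ENNReal.ofReal (4 * Real.arcsin (2 * ρ' / ‖z - z'‖)) ∧
    (volume {β : ℝ | β ∈ Set.Icc 0 (2 * π) ∧
        ∃ t : ℝ, w + (t : ℂ) * Complex.exp (β * Complex.I) ∈ Metric.closedBall z' ρ'}).toReal
        / (2 * π)
      ≤ (2 / π) * Real.arcsin (2 * ρ' / ‖z - z'‖) :=
  measure_angles_hitting_far_disc_general z z' w ρ' hsep hw
end

section
/- (Analog of Theorem 3(i).) Let ρ' > 0 and Δ > 2ρ'. Let z ∈ ℂ, let w ∈ ℂ with |w − z| ≤ ρ', and let z_1, …, z_m ∈ ℂ satisfy |z_j − z| ≥ Δ for all j. Then the set of angles β ∈ [0, 2π] for which the line {w + t·e^{iβ} : t ∈ ℝ} intersects at least one of the closed discs D(z_j, ρ'), j = 1, …, m, has Lebesgue measure at most 4·m·arcsin(2ρ'/Δ). -/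
/-!
The line through `w` in direction `e^{iβ}` lies at distance `‖c - w‖ |sin (β - arg (c - w))|`
from `c`, and a disc centre `c = z_j` satisfies `‖c - w‖ ≥ Δ - ρ' ≥ Δ / 2`; so the line can only
meet `D(z_j, ρ')` when `|sin (β - θ_j)| ≤ 2ρ'/Δ`. Since `|sin x| = sin ‖x‖` for the norm of
`ℝ/πℤ`, this says that `β mod π` lies in the arc of radius `arcsin (2ρ'/Δ)` around `θ_j`. The
interval `[0, 2π]` covers `ℝ/πℤ` twice, so each disc costs at most `4 arcsin (2ρ'/Δ)`, and a
union bound over the `m` discs finishes.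
-/

open MeasureTheory Real

instance Real.fact_zero_lt_pi : Fact (0 < π) := ⟨pi_pos⟩

theorem Real.norm_addCircle_pi_le (x : AddCircle π) : ‖x‖ ≤ π / 2 := by
  simpa [abs_of_pos pi_pos] using AddCircle.norm_le_half_period π (x := x) pi_ne_zero

theorem Real.abs_sin_eq_sin_norm_coe_addCircle (x : ℝ) :
    |sin x| = sin ‖(x : AddCircle π)‖ := by
  set y := x - round (π⁻¹ * x) * π
  have hy : ‖(x : AddCircle π)‖ = |y| := AddCircle.norm_eq π
  have hy_le : |y| ≤ π / 2 := hy ▸ norm_addCircle_pi_le _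
  rw [hy, ← abs_sin_eq_sin_abs_of_abs_le_pi (by linarith [pi_pos]), sin_sub_int_mul_pi, abs_mul,
    abs_neg_one_zpow, one_mul]

theorem Real.abs_sin_le_iff_norm_coe_addCircle_le (x s : ℝ) :
    |sin x| ≤ s ↔ ‖(x : AddCircle π)‖ ≤ arcsin s := by
  have h0 : 0 ≤ ‖(x : AddCircle π)‖ := norm_nonneg _
  rw [le_arcsin_iff_sin_le' ⟨by linarith [pi_pos], norm_addCircle_pi_le _⟩, abs_sin_eq_sin_norm_coe_addCircle]

theorem AddCircle.volume_coe_preimage_inter_Icc_two_mul_le {T : ℝ} [hT : Fact (0 < T)]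
    {U : Set (AddCircle T)} (hU : MeasurableSet U) (t : ℝ) :
    volume (((↑) : ℝ → AddCircle T) ⁻¹' U ∩ Set.Icc t (t + 2 * T)) ≤ 2 * volume U := by
  set V := ((↑) : ℝ → AddCircle T) ⁻¹' U
  calc volume (V ∩ Set.Icc t (t + 2 * T))
      = volume (V ∩ Set.Ioc t (t + T) ∪ V ∩ Set.Ioc (t + T) (t + T + T)) := by
        rw [← Set.inter_union_distrib_left,
          Set.Ioc_union_Ioc_eq_Ioc (by linarith [hT.out]) (by linarith [hT.out]), add_assoc,
          ← two_mul]
        exact measure_congr ((ae_eq_refl V).inter Ioc_ae_eq_Icc.symm)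
    _ ≤ volume (V ∩ Set.Ioc t (t + T)) + volume (V ∩ Set.Ioc (t + T) (t + T + T)) :=
        measure_union_le _ _
    _ = 2 * volume U := by
        rw [← add_projection_respects_measure T t hU,
          ← add_projection_respects_measure T (t + T) hU, two_mul]

theorem Real.volume_setOf_abs_sin_sub_le_le (θ s : ℝ) :
    volume {β : ℝ | β ∈ Set.Icc 0 (2 * π) ∧ |sin (β - θ)| ≤ s}
      ≤ ENNReal.ofReal (4 * arcsin s) := by
  have hset : {β : ℝ | β ∈ Set.Icc 0 (2 * π) ∧ |sin (β - θ)| ≤ s} =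
      ((↑) : ℝ → AddCircle π) ⁻¹' Metric.closedBall (θ : AddCircle π) (arcsin s) ∩
        Set.Icc 0 (0 + 2 * π) := by
    ext β
    simp [abs_sin_le_iff_norm_coe_addCircle_le, dist_eq_norm, and_comm]
  calc _ ≤ 2 * volume (Metric.closedBall (θ : AddCircle π) (arcsin s)) :=
        hset ▸ AddCircle.volume_coe_preimage_inter_Icc_two_mul_le
          Metric.isClosed_closedBall.measurableSet 0
    _ = ENNReal.ofReal (2 * min π (2 * arcsin s)) := by
        rw [AddCircle.volume_closedBall, ENNReal.ofReal_mul zero_le_two, ENNReal.ofReal_ofNat]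
    _ ≤ ENNReal.ofReal (4 * arcsin s) :=
        ENNReal.ofReal_le_ofReal (by linarith [min_le_right π (2 * arcsin s)])

open Complex in
theorem Complex.norm_sub_mul_abs_sin_sub_arg_le_dist (w c : ℂ) (β t : ℝ) :
    ‖c - w‖ * |Real.sin (β - arg (c - w))| ≤ dist (w + t * exp (β * I)) c := by
  set p := c - w
  have hrot : (w + t * exp (β * I) - c) * exp (-(β * I))
      = t - ‖p‖ * exp (↑(arg p - β) * I) := by
    conv_lhs => rw [show w + t * exp (β * I) - c = t * exp (β * I) - p by simp [p]; ring,
      ← norm_mul_exp_arg_mul_I p]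
    rw [sub_mul, mul_assoc, mul_assoc, ← exp_add, ← exp_add, add_neg_cancel, exp_zero, mul_one]
    congr 3
    push_cast
    ring
  have him : (t - ‖p‖ * exp (↑(arg p - β) * I)).im = ‖p‖ * Real.sin (β - arg p) := by
    rw [sub_im, ofReal_im, im_ofReal_mul, exp_ofReal_mul_I_im, ← neg_sub β, Real.sin_neg]
    ring
  calc ‖p‖ * |Real.sin (β - arg p)| = |(t - ‖p‖ * exp (↑(arg p - β) * I)).im| := by
        rw [him, abs_mul, abs_norm]
    _ ≤ ‖(w + t * exp (β * I) - c) * exp (-(β * I))‖ := hrot ▸ abs_im_le_norm _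
    _ = dist (w + t * exp (β * I)) c := by
        rw [norm_mul, ← neg_mul, ← ofReal_neg, norm_exp_ofReal_mul_I, mul_one, dist_eq_norm]

theorem Complex.abs_sin_sub_arg_le_of_mem_closedBall {z w c : ℂ} {ρ Δ β t : ℝ}
    (hΔ : 2 * ρ < Δ) (hw : ‖w - z‖ ≤ ρ) (hc : Δ ≤ ‖c - z‖)
    (h : w + t * exp (β * I) ∈ Metric.closedBall c ρ) :
    |Real.sin (β - arg (c - w))| ≤ 2 * ρ / Δ := by
  have hρ : 0 ≤ ρ := dist_nonneg.trans h
  have hcw : Δ / 2 ≤ ‖c - w‖ := by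
    have := norm_sub_le_norm_sub_add_norm_sub c w z
    linarith
  have hΔ2 : 0 < Δ / 2 := by linarith
  calc |Real.sin (β - arg (c - w))| ≤ ρ / ‖c - w‖ := by
        rw [le_div_iff₀ (hΔ2.trans_le hcw), mul_comm]
        exact (norm_sub_mul_abs_sin_sub_arg_le_dist w c β t).trans h
    _ ≤ ρ / (Δ / 2) := div_le_div_of_nonneg_left hρ hΔ2 hcw
    _ = 2 * ρ / Δ := by field_simp

theorem measure_angles_hitting_some_far_disc_general (ρ' Δ : ℝ) (hΔ : 2 * ρ' < Δ)
    (z w : ℂ) (hw : ‖w - z‖ ≤ ρ')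
    (m : ℕ) (zs : Fin m → ℂ) (hzs : ∀ j, Δ ≤ ‖zs j - z‖) :
    volume {β : ℝ | β ∈ Set.Icc 0 (2 * π) ∧
        ∃ j : Fin m, ∃ t : ℝ,
          w + (t : ℂ) * Complex.exp (β * Complex.I) ∈ Metric.closedBall (zs j) ρ'}
      ≤ ENNReal.ofReal (4 * m * Real.arcsin (2 * ρ' / Δ)) := by
  calc _ ≤ volume (⋃ j : Fin m, {β : ℝ | β ∈ Set.Icc 0 (2 * π) ∧
          |sin (β - (zs j - w).arg)| ≤ 2 * ρ' / Δ}) := by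
        refine measure_mono ?_
        rintro β ⟨hβ, j, t, ht⟩
        exact Set.mem_iUnion.2
          ⟨j, hβ, Complex.abs_sin_sub_arg_le_of_mem_closedBall hΔ hw (hzs j) ht⟩
    _ ≤ ∑ j : Fin m, volume {β : ℝ | β ∈ Set.Icc 0 (2 * π) ∧
          |sin (β - (zs j - w).arg)| ≤ 2 * ρ' / Δ} := measure_iUnion_fintype_le _ _
    _ ≤ ∑ _j : Fin m, ENNReal.ofReal (4 * arcsin (2 * ρ' / Δ)) :=
        Finset.sum_le_sum fun j _ => volume_setOf_abs_sin_sub_le_le _ _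
    _ = ENNReal.ofReal (4 * m * arcsin (2 * ρ' / Δ)) := by
        rw [Finset.sum_const, Finset.card_univ, Fintype.card_fin, nsmul_eq_mul,
          ← ENNReal.ofReal_natCast, ← ENNReal.ofReal_mul m.cast_nonneg, mul_left_comm, mul_assoc]

/-- analog of Theorem 3(i): Let `ρ' > 0`, `Δ > 2ρ'`, let `w` lie in the
disc `D(z, ρ')`, and let `z_1, …, z_m` be points with `|z_j − z| ≥ Δ` for all `j`.
Then the set of angles `β ∈ [0, 2π]` for which the line `{w + t·e^{iβ} : t ∈ ℝ}` meets
at least one disc `D(z_j, ρ')` has Lebesgue measure at most `4·m·arcsin(2ρ'/Δ)`. -/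
theorem measure_angles_hitting_some_far_disc (ρ' Δ : ℝ) (hρ : 0 < ρ') (hΔ : 2 * ρ' < Δ)
    (z w : ℂ) (hw : ‖w - z‖ ≤ ρ')
    (m : ℕ) (zs : Fin m → ℂ) (hzs : ∀ j, Δ ≤ ‖zs j - z‖) :
    volume {β : ℝ | β ∈ Set.Icc 0 (2 * π) ∧
        ∃ j : Fin m, ∃ t : ℝ,
          w + (t : ℂ) * Complex.exp (β * Complex.I) ∈ Metric.closedBall (zs j) ρ'}
      ≤ ENNReal.ofReal (4 * m * Real.arcsin (2 * ρ' / Δ)) :=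
  measure_angles_hitting_some_far_disc_general ρ' Δ hΔ z w hw m zs hzs
end

section
/- (Analog of Theorem 3(ii).) Let ρ' > 0 and Δ > 2ρ', let z_1, …, z_N ∈ ℂ be N points with pairwise distances |z_i − z_j| ≥ Δ for i ≠ j, and let w ∈ ℂ be any fixed point. Then the set of angles β ∈ [0, 2π] for which the line {w + t·e^{iβ} : t ∈ ℝ} intersects at least two of the closed discs D(z_1, ρ'), …, D(z_N, ρ') has Lebesgue measure at most 2·N·(N − 1)·arcsin(2ρ'/Δ). -/
/-!
If the line through `w` in direction `e^{iβ}` meets `D(a, ρ')` and `D(b, ρ')`, then `b - a` lies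
within `2ρ'` of a real multiple of `e^{iβ}`, so `(b - a) e^{-iβ}` has imaginary part at most `2ρ'`
in absolute value. Its argument, the angle from `β` to `arg (b - a)` or (after swapping `a` and
`b`) to `arg (a - b)`, is then at most `arcsin (2ρ'/Δ)`. Thus every admissible `β` lies, modulo
`2π`, in an arc of length `2 arcsin (2ρ'/Δ)` around `arg (z_j - z_i)` for one of the `N (N - 1)`
ordered pairs `i ≠ j`.
-/

open MeasureTheory Real ComplexConjugate Metric Set

namespace Complex

theorem abs_im_sub_mul_conj_le_of_mem_closedBall {a b w d : ℂ} {r s t t' : ℝ}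
    (ha : w + t * d ∈ closedBall a r) (hb : w + t' * d ∈ closedBall b s) :
    |((b - a) * conj d).im| ≤ (r + s) * ‖d‖ := by
  rw [mem_closedBall, dist_eq] at ha hb
  have h : (b - a) * conj d
      = ((t' - t) * normSq d : ℝ) - ((w + t' * d - b) - (w + t * d - a)) * conj d := by
    push_cast [← mul_conj]; ring
  rw [h, sub_im, ofReal_im, zero_sub, abs_neg]
  calc _ ≤ ‖((w + t' * d - b) - (w + t * d - a)) * conj d‖ := abs_im_le_norm _
    _ ≤ (s + r) * ‖d‖ := by
      rw [norm_mul, norm_conj]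
      gcongr
      exact (norm_sub_le _ _).trans (add_le_add hb ha)
    _ = (r + s) * ‖d‖ := by ring

theorem abs_arg_le_arcsin_of_re_nonneg {v : ℂ} {ε δ : ℝ} (hre : 0 ≤ v.re) (him : |v.im| ≤ ε)
    (hδ : 0 < δ) (hv : δ ≤ ‖v‖) : |arg v| ≤ arcsin (ε / δ) := by
  have hratio : |v.im / ‖v‖| ≤ ε / δ := by
    rw [abs_div, abs_norm]
    exact div_le_div₀ ((abs_nonneg _).trans him) him hδ hv
  rw [arg_of_re_nonneg hre, abs_le, ← arcsin_neg]
  exact ⟨arcsin_le_arcsin (neg_le_of_abs_le hratio), arcsin_le_arcsin (le_of_abs_le hratio)⟩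

theorem dist_coe_angle_arg_eq {u : ℂ} (hu : u ≠ 0) (β : ℝ) :
    dist (β : Real.Angle) (arg u) = |arg (u * conj (exp (β * I)))| := by
  have hβ : (arg (exp (β * I)) : Real.Angle) = β := by
    have h := arg_cos_add_sin_mul_I_coe_angle β
    rwa [Real.Angle.cos_coe, Real.Angle.sin_coe, ofReal_cos, ofReal_sin, ← exp_mul_I] at h
  have hmul : (arg (u * conj (exp (β * I))) : Real.Angle) = arg u - β := by
    rw [arg_mul_coe_angle hu ((map_ne_zero _).mpr (exp_ne_zero _)), arg_conj_coe_angle, hβ,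
      sub_eq_add_neg]
  rw [dist_comm, dist_eq_norm, ← hmul]
  exact (AddCircle.norm_coe_eq_abs_iff (p := 2 * π) two_pi_pos.ne').mpr
    (by rw [abs_of_pos two_pi_pos]; linarith [abs_arg_le_pi (u * conj (exp (β * I)))])

end Complex

theorem AddCircle.volume_Icc_inter_preimage_closedBall {T : ℝ} [Fact (0 < T)] (t : ℝ)
    (x : AddCircle T) (ε : ℝ) :
    volume (Icc t (t + T) ∩ (↑) ⁻¹' closedBall x ε) = ENNReal.ofReal (min T (2 * ε)) := by
  rw [inter_comm, ← Measure.restrict_apply' measurableSet_Icc,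
    ← Measure.restrict_congr_set Ioc_ae_eq_Icc,
    (AddCircle.measurePreserving_mk T t).measure_preimage
      measurableSet_closedBall.nullMeasurableSet,
    AddCircle.volume_closedBall]

theorem coe_angle_mem_closedBall_arg_of_line_meets_closedBalls {a b w : ℂ} {r δ β : ℝ}
    (hδ : 0 < δ) (hab : δ ≤ ‖b - a‖)
    (ha : ∃ t : ℝ, w + t * Complex.exp (β * Complex.I) ∈ closedBall a r)
    (hb : ∃ t : ℝ, w + t * Complex.exp (β * Complex.I) ∈ closedBall b r) :
    (β : Real.Angle) ∈ closedBall (Complex.arg (b - a) : Real.Angle) (arcsin (2 * r / δ)) ∨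
      (β : Real.Angle) ∈ closedBall (Complex.arg (a - b) : Real.Angle) (arcsin (2 * r / δ)) := by
  obtain ⟨t, ht⟩ := ha
  obtain ⟨t', ht'⟩ := hb
  set v := (b - a) * conj (Complex.exp (β * Complex.I))
  have him : |v.im| ≤ 2 * r := by
    have h := Complex.abs_im_sub_mul_conj_le_of_mem_closedBall ht ht'
    rwa [Complex.norm_exp_ofReal_mul_I, mul_one, ← two_mul] at h
  have hv : δ ≤ ‖v‖ := by
    rwa [norm_mul, Complex.norm_conj, Complex.norm_exp_ofReal_mul_I, mul_one]
  have hba : b - a ≠ 0 := norm_pos_iff.mp (hδ.trans_le hab)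
  rcases le_total 0 v.re with hre | hre
  · left
    rw [mem_closedBall, Complex.dist_coe_angle_arg_eq hba]
    exact Complex.abs_arg_le_arcsin_of_re_nonneg hre him hδ hv
  · right
    have hneg : (a - b) * conj (Complex.exp (β * Complex.I)) = -v := by ring
    rw [mem_closedBall, Complex.dist_coe_angle_arg_eq (sub_ne_zero.mpr (sub_ne_zero.mp hba).symm),
      hneg]
    exact Complex.abs_arg_le_arcsin_of_re_nonneg (by simpa using hre) (by simpa using him) hδ
      (by rwa [norm_neg])

/-- analog of Theorem 3(ii): Let `ρ' > 0`, `Δ > 2ρ'`, let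
`z_1, …, z_N ∈ ℂ` have pairwise distances `≥ Δ`, and let `w ∈ ℂ` be fixed. Then the set
of angles `β ∈ [0, 2π]` for which the line `{w + t·e^{iβ} : t ∈ ℝ}` meets at least two
of the closed discs `D(z_i, ρ')` has Lebesgue measure at most
`2·N·(N − 1)·arcsin(2ρ'/Δ)`. -/
theorem measure_angles_hitting_two_discs (ρ' Δ : ℝ) (hρ : 0 < ρ') (hΔ : 2 * ρ' < Δ)
    (N : ℕ) (zs : Fin N → ℂ) (hzs : ∀ i j, i ≠ j → Δ ≤ ‖zs i - zs j‖)
    (w : ℂ) :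
    volume {β : ℝ | β ∈ Set.Icc 0 (2 * π) ∧
        ∃ i j : Fin N, i ≠ j ∧
          (∃ t : ℝ, w + (t : ℂ) * Complex.exp (β * Complex.I) ∈ Metric.closedBall (zs i) ρ') ∧
          (∃ t : ℝ, w + (t : ℂ) * Complex.exp (β * Complex.I) ∈ Metric.closedBall (zs j) ρ')}
      ≤ ENNReal.ofReal (2 * N * ((N : ℝ) - 1) * Real.arcsin (2 * ρ' / Δ)) := by
  have : Fact (0 < 2 * π) := ⟨two_pi_pos⟩
  set c := arcsin (2 * ρ' / Δ)
  -- `Real.Angle` is by definition `AddCircle (2 * π)`, which carries the Haar measure.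
  let arc (p : Fin N × Fin N) : Set ℝ :=
    Icc 0 (2 * π) ∩
      ((↑) : ℝ → AddCircle (2 * π)) ⁻¹' closedBall (Complex.arg (zs p.2 - zs p.1) : ℝ) c
  calc _ ≤ volume (⋃ p ∈ (Finset.univ : Finset (Fin N)).offDiag, arc p) := by
        refine measure_mono ?_
        rintro β ⟨hβ, i, j, hij, hi, hj⟩
        rcases coe_angle_mem_closedBall_arg_of_line_meets_closedBalls (by linarith)
          (hzs j i hij.symm) hi hj with h | h
        · exact mem_iUnion₂.mpr ⟨(i, j), by simpa using hij, hβ, h⟩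
        · exact mem_iUnion₂.mpr ⟨(j, i), by simpa using hij.symm, hβ, h⟩
    _ ≤ ∑ p ∈ (Finset.univ : Finset (Fin N)).offDiag, volume (arc p) :=
        measure_biUnion_finset_le _ _
    _ ≤ ∑ p ∈ (Finset.univ : Finset (Fin N)).offDiag, ENNReal.ofReal (2 * c) :=
        Finset.sum_le_sum fun p _ =>
          (zero_add (2 * π) ▸ AddCircle.volume_Icc_inter_preimage_closedBall 0 _ c).le.trans
          (ENNReal.ofReal_le_ofReal (min_le_right _ _))
    _ = ENNReal.ofReal (2 * N * ((N : ℝ) - 1) * c) := by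
      rw [Finset.sum_const, Finset.offDiag_card, Finset.card_univ, Fintype.card_fin, nsmul_eq_mul,
        ← ENNReal.ofReal_natCast, ← ENNReal.ofReal_mul (Nat.cast_nonneg _),
        Nat.cast_sub (Nat.le_mul_self N)]
      congr 1
      push_cast
      ring
end
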